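/- arXiv:1803.03950 — 2 statements merged into one kernel-verified Lean document; each statement's English description precedes it below -/
import Mathlib

section
/- Let d be a positive integer and ε > 0. Every finite graph G on h ≥ 1 vertices with maximum average degree at most d - ε contains a 'special' independent set I: an independent set of size at least εh/d² all of whose vertices have degree at most d - 1 in G. -/
/-!
Applied to the whole graph, the bound on the maximum average degree gives `2|E| ≤ (d - ε)h`.
Since `2|E|` is the degree sum, fewer than `(d - ε)h/d` vertices have degree at least `d`, so at
least `εh/d` vertices have degree below `d`. Among these, choosing a vertex greedily and
discarding it together with its at most `d - 1` neighbours keeps at least a `1/d` fraction of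
them as an independent set.
-/

open Finset

namespace SimpleGraph
variable {V : Type*} [Fintype V] (G : SimpleGraph V) [DecidableRel G.Adj]

theorem exists_isIndepSet_subset_card_le_mul [DecidableEq V] {d : ℕ} (s : Finset V)
    (hdeg : ∀ v ∈ s, G.degree v < d) : ∃ I ⊆ s, G.IsIndepSet (I : Set V) ∧ #s ≤ d * #I := by
  induction s using Finset.strongInduction with
  | H s ih =>
  obtain rfl | ⟨v, hv⟩ := s.eq_empty_or_nonempty
  · exact ⟨∅, by simp⟩
  set N := insert v (G.neighborFinset v)
  have hts : s \ N ⊂ s := ssubset_iff_of_subset sdiff_subset |>.2 ⟨v, hv, by simp [N]⟩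
  obtain ⟨I, hIt, hI, hcard⟩ := ih _ hts fun u hu ↦ hdeg u (sdiff_subset hu)
  have hvI : v ∉ I := fun h ↦ by simpa [N] using hIt h
  refine ⟨insert v I, insert_subset hv (hIt.trans sdiff_subset), ?_, ?_⟩
  · rw [coe_insert, ← isClique_compl, isClique_insert]
    refine ⟨(isClique_compl G).2 hI, fun w hw hne ↦ ⟨hne, fun hvw ↦ ?_⟩⟩
    simpa [N, hvw] using hIt hw
  · have hN : #N ≤ d := (card_insert_le _ _).trans (by simpa using hdeg v hv)
    calc #s = #(s \ N) + #(s ∩ N) := (card_sdiff_add_card_inter s N).symm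
      _ ≤ d * #I + d := add_le_add hcard ((card_le_card inter_subset_right).trans hN)
      _ = d * #(insert v I) := by rw [card_insert_of_notMem hvI, mul_add_one]

theorem mul_card_le_degree_le_two_mul_card_edgeFinset (d : ℕ) :
    d * #{v | d ≤ G.degree v} ≤ 2 * #G.edgeFinset := by
  rw [← sum_degrees_eq_twice_card_edges, mul_comm, ← smul_eq_mul, ← sum_const]
  exact (sum_le_sum fun v hv ↦ (mem_filter.1 hv).2).trans
    (sum_le_sum_of_subset (subset_univ _))

theorem two_mul_card_edgeFinset_le_of_forall_subgraph [Nonempty V] {c : ℝ}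
    (h : ∀ H : G.Subgraph, H.verts.Nonempty → 2 * (H.edgeSet.ncard : ℝ) ≤ c * H.verts.ncard) :
    2 * (#G.edgeFinset : ℝ) ≤ c * Fintype.card V := by
  simpa [Subgraph.edgeSet_top, ← coe_edgeFinset, Set.ncard_coe_finset, Set.ncard_univ]
    using h ⊤ Set.univ_nonempty

theorem mul_card_le_mul_card_degree_lt {d : ℕ} {ε : ℝ}
    (h : 2 * (#G.edgeFinset : ℝ) ≤ (d - ε) * Fintype.card V) :
    ε * Fintype.card V ≤ d * #{v | G.degree v < d} := by
  have hsplit : (#{v | G.degree v < d} : ℝ) + #{v | d ≤ G.degree v} = Fintype.card V := by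
    have := card_filter_add_card_filter_not (s := univ) (fun v ↦ G.degree v < d)
    simp only [not_lt, card_univ] at this
    exact_mod_cast this
  have hbig : (d : ℝ) * #{v | d ≤ G.degree v} ≤ 2 * #G.edgeFinset := by
    exact_mod_cast G.mul_card_le_degree_le_two_mul_card_edgeFinset d
  linear_combination h + hbig - (d : ℝ) * hsplit

end SimpleGraph

theorem stmt2_general {V : Type*} [Fintype V] [DecidableEq V] (G : SimpleGraph V)
    [DecidableRel G.Adj] (d : ℕ) (ε : ℝ)
    (hV : 1 ≤ Fintype.card V)
    (hmad : ∀ H : G.Subgraph, H.verts.Nonempty →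
      2 * (H.edgeSet.ncard : ℝ) ≤ ((d : ℝ) - ε) * H.verts.ncard) :
    ∃ I : Finset V,
      (∀ u ∈ I, ∀ v ∈ I, ¬ G.Adj u v) ∧
      (∀ v ∈ I, G.degree v ≤ d - 1) ∧
      ε * (Fintype.card V : ℝ) / (d : ℝ) ^ 2 ≤ (I.card : ℝ) := by
  have : Nonempty V := Fintype.card_pos_iff.mp hV
  have hS :=
    G.mul_card_le_mul_card_degree_lt (G.two_mul_card_edgeFinset_le_of_forall_subgraph hmad)
  obtain ⟨I, hIS, hI, hcard⟩ :=
    G.exists_isIndepSet_subset_card_le_mul {v | G.degree v < d} fun v hv ↦ (mem_filter.1 hv).2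
  refine ⟨I, fun u hu v hv huv ↦ hI hu hv huv.ne huv,
    fun v hv ↦ Nat.le_sub_one_of_lt (mem_filter.1 (hIS hv)).2, ?_⟩
  have hcard' : (#{v | G.degree v < d} : ℝ) ≤ d * #I := by exact_mod_cast hcard
  refine div_le_of_le_mul₀ (by positivity) (by positivity) ?_
  calc ε * Fintype.card V ≤ d * #{v | G.degree v < d} := hS
    _ ≤ d * (d * #I) := by gcongr
    _ = #I * d ^ 2 := by ring

/-- Every finite graph `G` on `h ≥ 1` vertices with maximum average
degree at most `d - ε` (`d` a positive integer, `ε > 0`) contains a special independent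
set: an independent set `I` with `|I| ≥ ε·h/d²` all of whose vertices have degree at
most `d - 1` in `G`. -/
theorem stmt2 {V : Type*} [Fintype V] [DecidableEq V] (G : SimpleGraph V)
    [DecidableRel G.Adj] (d : ℕ) (hd : 0 < d) (ε : ℝ) (hε : 0 < ε)
    (hV : 1 ≤ Fintype.card V)
    (hmad : ∀ H : G.Subgraph, H.verts.Nonempty →
      2 * (H.edgeSet.ncard : ℝ) ≤ ((d : ℝ) - ε) * H.verts.ncard) :
    ∃ I : Finset V,
      (∀ u ∈ I, ∀ v ∈ I, ¬ G.Adj u v) ∧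
      (∀ v ∈ I, G.degree v ≤ d - 1) ∧
      ε * (Fintype.card V : ℝ) / (d : ℝ) ^ 2 ≤ (I.card : ℝ) :=
  stmt2_general G d ε hV hmad
end

section
/- Let G be a finite graph whose every nonempty subgraph H satisfies 2|E(H)| < d·|V(H)| for a positive integer d, and let k ≥ d + 1. Then every k-colouring of G can be transformed into every other k-colouring by a finite sequence of single-vertex recolourings through proper k-colourings. -/
/-- A proper `k`-colouring of `G`. -/
abbrev PropColoring {V : Type*} (G : SimpleGraph V) (k : ℕ) :=
  {f : V → Fin k // ∀ u v, G.Adj u v → f u ≠ f v}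

/-- The reconfiguration graph `R_k(G)`: vertices are the proper `k`-colourings of `G`,
two colourings adjacent iff they differ on exactly one vertex. -/
def ReconfGraph {V : Type*} (G : SimpleGraph V) (k : ℕ) : SimpleGraph (PropColoring G k) where
  Adj f g := ∃ v, f.1 v ≠ g.1 v ∧ ∀ w, w ≠ v → f.1 w = g.1 w
  symm := by constructor; rintro f g ⟨v, hv, hw⟩; exact ⟨v, hv.symm, fun w h => (hw w h).symm⟩
  loopless := by constructor; rintro f ⟨v, hv, _⟩; exact hv rfl

/-- The number of steps along a walk in the reconfiguration graph at which the colour of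
the vertex `u` changes. -/
def recolorCount {V : Type*} {G : SimpleGraph V} {k : ℕ} (u : V)
    {α β : PropColoring G k} (p : (ReconfGraph G k).Walk α β) : ℕ :=
  ((p.support.zip p.support.tail).filter (fun q => decide (q.1.1 u ≠ q.2.1 u))).length

/-- Restriction of a proper colouring of `G` to an induced subgraph. -/
def PropColoring.restrict {V : Type*} {G : SimpleGraph V} {k : ℕ} (s : Set V)
    (α : PropColoring G k) : PropColoring (G.induce s) k :=
  ⟨fun v => α.1 v.1, fun u v h => α.2 u.1 v.1 h⟩

/-!
A graph in which every nonempty subgraph has average degree below `d` is `(d - 1)`-degenerate: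
every nonempty vertex set contains a vertex with at most `d - 1` neighbours inside it. Remove
such a vertex `v`, reconfigure the remaining vertices by induction, and replay that sequence on
the whole graph: whenever the next step would give a neighbour of `v` the colour of `v`, first
recolour `v` with one of the at least two colours (`k ≥ d + 1`) that no neighbour currently
uses, choosing one different from the upcoming colour. Finally recolour `v` itself.
-/

open Finset Function

namespace SimpleGraph

variable {V α : Type*}

variable (G : SimpleGraph V) in
def IsDegenerate [DecidableRel G.Adj] (d : ℕ) : Prop :=
  ∀ s : Finset V, s.Nonempty → ∃ v ∈ s, #{w ∈ s | G.Adj v w} ≤ d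

variable {G : SimpleGraph V}

lemma sum_card_filter_adj_eq_two_mul_ncard_edgeSet [Fintype V] [DecidableRel G.Adj]
    (s : Finset V) :
    ∑ v ∈ s, #{w ∈ s | G.Adj v w} = 2 * ((⊤ : G.Subgraph).induce s).edgeSet.ncard := by
  classical
  set H := ((⊤ : G.Subgraph).induce s).spanningCoe
  have hdeg : ∀ v, H.degree v = if v ∈ s then #{w ∈ s | G.Adj v w} else 0 := by
    intro v
    rw [← card_neighborFinset_eq_degree, ← card_empty, ← apply_ite card]
    congr 1
    ext w
    simp only [mem_neighborFinset, H, Subgraph.spanningCoe_adj, Subgraph.induce_adj,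
      Subgraph.top_adj, mem_coe]
    split_ifs with hv <;> simp [hv]
  rw [← Subgraph.edgeSet_spanningCoe, ← coe_edgeFinset, Set.ncard_coe_finset,
    ← sum_degrees_eq_twice_card_edges, sum_congr rfl fun v _ => hdeg v, sum_ite_mem, univ_inter]

lemma isDegenerate_of_two_mul_ncard_edgeSet_lt [Fintype V] [DecidableRel G.Adj] {d : ℕ}
    (hmad : ∀ H : G.Subgraph, H.verts.Nonempty →
      2 * (H.edgeSet.ncard : ℝ) < (d + 1 : ℕ) * H.verts.ncard) :
    G.IsDegenerate d := by
  intro s hs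
  by_contra! hlarge
  have hlt := hmad ((⊤ : G.Subgraph).induce s) (by simpa using hs)
  rw [Subgraph.induce_verts, Set.ncard_coe_finset] at hlt
  have hge : (d + 1) * #s ≤ 2 * ((⊤ : G.Subgraph).induce s).edgeSet.ncard := by
    rw [← sum_card_filter_adj_eq_two_mul_ncard_edgeSet, mul_comm, ← smul_eq_mul, ← sum_const]
    exact sum_le_sum hlarge
  exact_mod_cast hlt.not_ge (by exact_mod_cast hge)

variable (G) in
def ProperOn (s : Finset V) (f : V → α) : Prop :=
  ∀ ⦃u w⦄, u ∈ s → w ∈ s → G.Adj u w → f u ≠ f w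

variable (G) in
def RecolorStepOn [DecidableEq V] (s : Finset V) (f g : V → α) : Prop :=
  G.ProperOn s g ∧ ∃ w ∈ s, ∃ c, g = update f w c

variable (G) in
abbrev RecolorReachOn [DecidableEq V] (s : Finset V) : (V → α) → (V → α) → Prop :=
  Relation.ReflTransGen (G.RecolorStepOn s)

lemma ProperOn.mono {s t : Finset V} {f : V → α} (hf : G.ProperOn t f) (hst : s ⊆ t) :
    G.ProperOn s f :=
  fun _ _ hu hw ↦ hf (hst hu) (hst hw)

lemma ProperOn.update [DecidableEq V] {s : Finset V} {f : V → α} (hf : G.ProperOn s f)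
    {v : V} {c : α} (hc : ∀ x ∈ s, G.Adj v x → f x ≠ c) : G.ProperOn s (update f v c) := by
  intro x y hx hy hxy
  rcases eq_or_ne x v with rfl | hxv
  · rw [update_self, update_of_ne hxy.ne.symm]
    exact (hc y hy hxy).symm
  rcases eq_or_ne y v with rfl | hyv
  · rw [update_self, update_of_ne hxv]
    exact hc x hx hxy.symm
  rw [update_of_ne hxv, update_of_ne hyv]
  exact hf hx hy hxy

lemma exists_ne_forall_adj_ne [DecidableRel G.Adj] [Fintype α] [DecidableEq α] (s : Finset V)
    {v : V} (hv : #{w ∈ s | G.Adj v w} + 1 < Fintype.card α) (f : V → α) (b : α) :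
    ∃ c ≠ b, ∀ x ∈ s, G.Adj v x → f x ≠ c := by
  have hcard : #(insert b ({w ∈ s | G.Adj v w}.image f)) < #(univ : Finset α) :=
    calc _ ≤ #({w ∈ s | G.Adj v w}.image f) + 1 := card_insert_le _ _
      _ ≤ #{w ∈ s | G.Adj v w} + 1 := by gcongr; exact card_image_le
      _ < _ := hv
  obtain ⟨c, -, hc⟩ := exists_mem_notMem_of_card_lt_card hcard
  simp only [mem_insert, mem_image, mem_filter, not_or, not_exists, not_and] at hc
  exact ⟨c, hc.1, fun x hx hvx ↦ hc.2 x ⟨hx, hvx⟩⟩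

/-- The recolouring of `w` in the step may be blocked only by `v`, so first move `v` to a
colour free in its neighbourhood and distinct from the new colour of `w`. -/
lemma RecolorStepOn.lift [DecidableEq V] [DecidableRel G.Adj] [Fintype α] [DecidableEq α]
    {s : Finset V} {v : V} (hv : v ∈ s) (hdeg : #{w ∈ s | G.Adj v w} + 1 < Fintype.card α)
    {g g' h : V → α} (hstep : G.RecolorStepOn (s.erase v) g g') (hh : G.ProperOn s h)
    (hhg : ∀ x ≠ v, h x = g x) :
    ∃ h', G.RecolorReachOn s h h' ∧ G.ProperOn s h' ∧ ∀ x ≠ v, h' x = g' x := by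
  obtain ⟨hg', w, hw, c, rfl⟩ := hstep
  have hws : w ∈ s := mem_of_mem_erase hw
  obtain ⟨b, hbc, hb⟩ := exists_ne_forall_adj_ne s hdeg h c
  have h₁ : G.ProperOn s (update h v b) := hh.update hb
  have h₂ : G.ProperOn s (update (update h v b) w c) := by
    refine h₁.update fun x hx hwx ↦ ?_
    rcases eq_or_ne x v with rfl | hxv
    · rwa [update_self]
    have hcx := hg' hw (mem_erase.2 ⟨hxv, hx⟩) hwx
    rw [update_self, update_of_ne hwx.ne.symm] at hcx
    rw [update_of_ne hxv, hhg x hxv]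
    exact hcx.symm
  refine ⟨_, .tail (.single ⟨h₁, v, hv, b, rfl⟩) ⟨h₂, w, hws, c, rfl⟩, h₂, fun x hxv ↦ ?_⟩
  rcases eq_or_ne x w with rfl | hxw
  · simp only [update_self]
  · simp only [update_of_ne hxw, update_of_ne hxv, hhg x hxv]

lemma RecolorReachOn.lift [DecidableEq V] [DecidableRel G.Adj] [Fintype α] [DecidableEq α]
    {s : Finset V} {v : V} (hv : v ∈ s) (hdeg : #{w ∈ s | G.Adj v w} + 1 < Fintype.card α)
    {f g : V → α} (hfg : G.RecolorReachOn (s.erase v) f g) (hf : G.ProperOn s f) :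
    ∃ h, G.RecolorReachOn s f h ∧ G.ProperOn s h ∧ ∀ x ≠ v, h x = g x := by
  induction hfg with
  | refl => exact ⟨f, .refl, hf, fun _ _ ↦ rfl⟩
  | tail _ hstep ih =>
    obtain ⟨h, hfh, hh, hhg⟩ := ih
    obtain ⟨h', hhh', hh', hh'g⟩ := hstep.lift hv hdeg hh hhg
    exact ⟨h', hfh.trans hhh', hh', hh'g⟩

/-- Recolour the rest of `s` by induction, with `v` carried along, then fix the colour of `v`. -/
lemma IsDegenerate.recolorReachOn [DecidableEq V] [DecidableRel G.Adj] [Fintype α]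
    [DecidableEq α] {d : ℕ} (hG : G.IsDegenerate d) (hα : d + 1 < Fintype.card α)
    (s : Finset V) {f g : V → α} (hf : G.ProperOn s f) (hg : G.ProperOn s g)
    (hfg : ∀ x ∉ s, f x = g x) : G.RecolorReachOn s f g := by
  induction s using Finset.strongInduction generalizing g with
  | H s ih =>
  rcases s.eq_empty_or_nonempty with rfl | hs
  · rw [funext fun x ↦ hfg x (notMem_empty x)]
  obtain ⟨v, hv, hvd⟩ := hG s hs
  have hreach : G.RecolorReachOn (s.erase v) f (update g v (f v)) := by
    refine ih _ (erase_ssubset hv) (hf.mono (erase_subset v s)) (fun x y hx hy hxy ↦ ?_)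
      fun x hx ↦ ?_
    · rw [update_of_ne (ne_of_mem_erase hx), update_of_ne (ne_of_mem_erase hy)]
      exact hg (mem_of_mem_erase hx) (mem_of_mem_erase hy) hxy
    · rcases eq_or_ne x v with rfl | hxv
      · rw [update_self]
      · rw [update_of_ne hxv]
        exact hfg x fun hxs ↦ hx (mem_erase.2 ⟨hxv, hxs⟩)
  obtain ⟨h, hfh, -, hhg⟩ := hreach.lift hv (by omega) hf
  have hgh : g = update h v (g v) := by
    ext x
    rcases eq_or_ne x v with rfl | hxv
    · rw [update_self]
    · rw [update_of_ne hxv, hhg x hxv, update_of_ne hxv]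
  exact hfh.tail ⟨hg, v, hv, g v, hgh⟩

lemma properOn_univ_iff [Fintype V] {f : V → α} :
    G.ProperOn univ f ↔ ∀ u v, G.Adj u v → f u ≠ f v := by
  simp [ProperOn]

lemma reconfGraph_reachable_of_eq_update [DecidableEq V] {k : ℕ} {β γ : PropColoring G k}
    {w : V} {c : Fin k} (hγ : γ.1 = update β.1 w c) : (ReconfGraph G k).Reachable β γ := by
  by_cases hc : c = β.1 w
  · rw [Subtype.ext (hγ.trans (by rw [hc, update_eq_self]))]
  · refine Adj.reachable ⟨w, ?_, fun x hx ↦ ?_⟩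
    · rw [hγ, update_self]
      exact Ne.symm hc
    · rw [hγ, update_of_ne hx]

lemma RecolorReachOn.reconfGraph_reachable [Fintype V] [DecidableEq V] {k : ℕ}
    {β : PropColoring G k} {g : V → Fin k} (h : G.RecolorReachOn univ β.1 g) :
    ∃ hg, (ReconfGraph G k).Reachable β ⟨g, hg⟩ := by
  induction h with
  | refl => exact ⟨β.2, Reachable.refl _⟩
  | tail _ hstep ih =>
    obtain ⟨_, hβg⟩ := ih
    obtain ⟨hg', w, -, c, hupd⟩ := hstep
    exact ⟨properOn_univ_iff.1 hg', hβg.trans (reconfGraph_reachable_of_eq_update hupd)⟩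

end SimpleGraph

/-- Let `G` be a finite graph whose every nonempty subgraph `H`
satisfies `2|E(H)| < d·|V(H)|` for a positive integer `d`, and let `k ≥ d + 1`. Then
every `k`-colouring of `G` can be transformed into every other by a finite sequence of
single-vertex recolourings through proper `k`-colourings. -/
theorem stmt14 {V : Type*} [Fintype V] (G : SimpleGraph V)
    (d k : ℕ) (hd : 0 < d) (hk : d + 1 ≤ k)
    (hmad : ∀ H : G.Subgraph, H.verts.Nonempty →
      2 * (H.edgeSet.ncard : ℝ) < (d : ℝ) * H.verts.ncard) :
    ∀ α β : PropColoring G k, (ReconfGraph G k).Reachable α β := by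
  classical
  obtain ⟨d, rfl⟩ := Nat.exists_eq_add_one_of_ne_zero hd.ne'
  have hG : G.IsDegenerate d := SimpleGraph.isDegenerate_of_two_mul_ncard_edgeSet_lt hmad
  intro α β
  have hαβ : G.RecolorReachOn univ α.1 β.1 :=
    hG.recolorReachOn (by simpa using hk) univ (SimpleGraph.properOn_univ_iff.2 α.2)
      (SimpleGraph.properOn_univ_iff.2 β.2) (by simp)
  obtain ⟨_, hreach⟩ := hαβ.reconfGraph_reachable
  exact hreach
end
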